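/- Let f : ℝ^d → ℂ (viewed as a function of d complex variables) be analytic on the open polydisc D_{λ₀}(2ρ') with ρ' > ρ > 0, where D_{λ₀}(r) = {λ : |λ_j - λ⁰_j| < r for all j}. Then sup_{λ ∈ D_{λ₀}(ρ)} |f(λ)| ≤ π^{-d} ∫_C |f(λ(t))| dt, where C = [0,2π]^d and λ_j(t) = λ⁰_j + 2ρ e^{i t_j}. -/

import Mathlib

open MeasureTheory Complex Set Metric

open scoped Real

private lemma one_var_estimate {g : ℂ → ℂ} {c : ℂ} {rho rho' : ℝ}
    (hrho : 0 < rho) (hrho' : rho < rho')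
    (hg : DifferentiableOn ℂ g (ball c (2 * rho'))) {w : ℂ}
    (hw : ‖w - c‖ < rho) :
    ‖g w‖ ≤
      Real.pi⁻¹ * ∫ t in Icc (0 : ℝ) (2 * Real.pi),
        ‖g (circleMap c (2 * rho) t)‖ := by
  have h2r : (0:ℝ) < 2 * rho := by linarith
  have hsub : closedBall c (2 * rho) ⊆ ball c (2 * rho') :=
    closedBall_subset_ball (by linarith)
  have hcont : ContinuousOn g (closedBall c (2 * rho)) := hg.continuousOn.mono hsub
  have hdc : DiffContOnCl ℂ g (ball c (2 * rho)) :=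
    ⟨hg.mono (fun x hx => hsub (ball_subset_closedBall hx)),
      hcont.mono closure_ball_subset_closedBall⟩
  have hwmem : w ∈ ball c (2 * rho) := by
    rw [mem_ball, Complex.dist_eq]; linarith
  have hC := hdc.circleIntegral_sub_inv_smul hwmem
  -- continuity of the integrand on the circle
  have hgc : ContinuousOn (fun t : ℝ => g (circleMap c (2 * rho) t)) (Icc 0 (2 * Real.pi)) := by
    refine hcont.comp (continuous_circleMap c (2 * rho)).continuousOn ?_
    exact fun t _ => circleMap_mem_closedBall c h2r.le t
  have hzw : ∀ t : ℝ, rho ≤ ‖circleMap c (2 * rho) t - w‖ := by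
    intro t
    have h1 : ‖circleMap c (2 * rho) t - c‖ = 2 * rho := by
      rw [circleMap_sub_center, norm_circleMap_zero, abs_of_pos h2r]
    have h2 : ‖circleMap c (2 * rho) t - c‖ ≤
        ‖circleMap c (2 * rho) t - w‖ + ‖w - c‖ := by
      have e : circleMap c (2 * rho) t - c =
          (circleMap c (2 * rho) t - w) + (w - c) := by ring
      rw [e]
      exact norm_add_le _ _
    rw [h1] at h2; linarith
  have hne : ∀ t : ℝ, circleMap c (2 * rho) t - w ≠ 0 := by
    intro t h
    have := hzw t
    rw [h] at this; simp at this; linarith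
  -- the key norm estimate
  have key : 2 * Real.pi * ‖g w‖ ≤
      2 * ∫ t in Icc (0 : ℝ) (2 * Real.pi), ‖g (circleMap c (2 * rho) t)‖ := by
    have h1 : ‖(2 * Real.pi * I : ℂ) • g w‖ = 2 * Real.pi * ‖g w‖ := by
      rw [norm_smul]
      congr 1
      simp [_root_.abs_of_pos Real.pi_pos]
    rw [← h1, ← hC, circleIntegral_def_Icc]
    simp only [deriv_circleMap]
    refine le_trans (norm_integral_le_integral_norm _) ?_
    have hInt1 : IntegrableOn
        (fun t : ℝ => ‖(circleMap 0 (2 * rho) t * I) •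
          (circleMap c (2 * rho) t - w)⁻¹ • g (circleMap c (2 * rho) t)‖)
        (Icc 0 (2 * Real.pi)) := by
      apply ContinuousOn.integrableOn_compact isCompact_Icc
      apply ContinuousOn.norm
      refine ContinuousOn.fun_smul ?_ (ContinuousOn.fun_smul ?_ hgc)
      · exact (((continuous_circleMap 0 (2*rho)).mul continuous_const)).continuousOn
      · exact ((continuous_circleMap c (2*rho)).continuousOn.sub continuousOn_const).inv₀
          (fun t _ => hne t)
    have hInt2 : IntegrableOn
        (fun t : ℝ => 2 * ‖g (circleMap c (2 * rho) t)‖)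
        (Icc 0 (2 * Real.pi)) := by
      apply ContinuousOn.integrableOn_compact isCompact_Icc
      exact (hgc.norm).const_smul (2:ℝ)
    refine le_trans (setIntegral_mono_on hInt1 hInt2 measurableSet_Icc ?_) ?_
    · intro t _
      rw [norm_smul, norm_smul]
      have e1 : ‖circleMap 0 (2 * rho) t * I‖ = 2 * rho := by
        simp [abs_of_pos h2r]
      have e2 : ‖(circleMap c (2 * rho) t - w)⁻¹‖ ≤ rho⁻¹ := by
        rw [norm_inv]
        exact inv_anti₀ hrho (hzw t)
      calc ‖circleMap 0 (2 * rho) t * I‖ * (‖(circleMap c (2 * rho) t - w)⁻¹‖ *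
            ‖g (circleMap c (2 * rho) t)‖)
          ≤ (2 * rho) * (rho⁻¹ * ‖g (circleMap c (2 * rho) t)‖) := by
            rw [e1]
            refine mul_le_mul_of_nonneg_left ?_ h2r.le
            exact mul_le_mul_of_nonneg_right e2 (norm_nonneg _)
        _ = 2 * ‖g (circleMap c (2 * rho) t)‖ := by
            field_simp
    · rw [integral_const_mul]
  rw [inv_mul_eq_div, le_div_iff₀ Real.pi_pos]
  nlinarith [key]

private lemma fubini_aux {n : ℕ} (g : (Fin (n + 1) → ℝ) → ℝ)
    (hg : IntegrableOn g (Icc (0 : Fin (n + 1) → ℝ) fun _ => 2 * Real.pi)) :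
    IntegrableOn (fun t : ℝ =>
        ∫ Θ in Icc (0 : Fin n → ℝ) fun _ => 2 * Real.pi, g (Fin.cons t Θ))
      (Icc (0 : ℝ) (2 * Real.pi)) ∧
    (∫ θ in Icc (0 : Fin (n + 1) → ℝ) fun _ => 2 * Real.pi, g θ) =
      ∫ t in Icc (0 : ℝ) (2 * Real.pi),
        ∫ Θ in Icc (0 : Fin n → ℝ) fun _ => 2 * Real.pi, g (Fin.cons t Θ) := by
  set e : ℝ × (Fin n → ℝ) ≃ᵐ (Fin (n + 1) → ℝ) :=
    (MeasurableEquiv.piFinSuccAbove (fun _ => ℝ) 0).symm with he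
  have hem : MeasurePreserving e :=
    (volume_preserving_piFinSuccAbove (fun _ : Fin (n + 1) => ℝ) 0).symm _
  have heπ : (e ⁻¹' Icc 0 fun _ => 2 * Real.pi) =
      Icc 0 (2 * Real.pi) ×ˢ Icc (0 : Fin n → ℝ) fun _ => 2 * Real.pi :=
    ((Fin.insertNthOrderIso (fun _ => ℝ) 0).preimage_Icc _ _).trans (Icc_prod_eq _ _)
  have hge : ∀ p : ℝ × (Fin n → ℝ), g (e p) = g (Fin.cons p.1 p.2) := by
    intro p
    congr 1
    simp only [he, MeasurableEquiv.piFinSuccAbove_symm_apply]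
    exact Fin.insertNth_zero' p.1 p.2
  have hint : IntegrableOn (fun p : ℝ × (Fin n → ℝ) => g (e p))
      ((Icc (0:ℝ) (2 * Real.pi)) ×ˢ (Icc (0 : Fin n → ℝ) fun _ => 2 * Real.pi)) := by
    rw [← heπ]
    exact (hem.integrableOn_comp_preimage e.measurableEmbedding).2 hg
  have hint' : Integrable (fun p : ℝ × (Fin n → ℝ) => g (e p))
      ((volume.restrict (Icc (0:ℝ) (2 * Real.pi))).prod
        (volume.restrict (Icc (0 : Fin n → ℝ) fun _ => 2 * Real.pi))) := by
    rwa [IntegrableOn, Measure.volume_eq_prod, ← Measure.prod_restrict] at hint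
  constructor
  · have := hint'.integral_prod_left
    refine this.congr (Filter.Eventually.of_forall fun t => ?_)
    simp only [hge]
  · rw [← hem.map_eq, setIntegral_map_equiv, heπ, Measure.volume_eq_prod, setIntegral_prod _ hint]
    simp only [hge]

set_option maxHeartbeats 1000000 in
private lemma polydisc_aux : ∀ (d : ℕ) (f : (Fin d → ℂ) → ℂ) (c : Fin d → ℂ)
    {rho rho' : ℝ}, 0 < rho → rho < rho' →
    DifferentiableOn ℂ f {z : Fin d → ℂ | ∀ j, ‖z j - c j‖ < 2 * rho'} →
    ∀ lam : Fin d → ℂ, (∀ j, ‖lam j - c j‖ < rho) →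
      ‖f lam‖ ≤ (Real.pi ^ d)⁻¹ *
        ∫ t in Icc (0 : Fin d → ℝ) (fun _ => 2 * Real.pi),
          ‖f (fun j => circleMap (c j) (2 * rho) (t j))‖ := by
  intro d
  induction d with
  | zero =>
    intro f c rho rho' hrho hrho' hf lam hlam
    have h0 : (fun _ : Fin 0 => 2 * Real.pi) = (0 : Fin 0 → ℝ) := Subsingleton.elim _ _
    rw [h0, Icc_self]
    rw [show (volume : Measure (Fin 0 → ℝ)) = Measure.pi fun _ => volume from rfl,
      Measure.pi_of_empty (fun _ : Fin 0 => volume) 0]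
    rw [Measure.restrict_singleton, Measure.dirac_apply_of_mem (mem_singleton _),
      one_smul, integral_dirac]
    have : (fun j : Fin 0 => circleMap (c j) (2 * rho) ((0 : Fin 0 → ℝ) j)) = lam :=
      Subsingleton.elim _ _
    rw [this]
    simp
  | succ d IH =>
    intro f c rho rho' hrho hrho' hf lam hlam
    have hpi := Real.pi_pos
    set R := 2 * rho with hR
    have hRpos : (0:ℝ) < R := by rw [hR]; linarith
    set lamtail : Fin d → ℂ := fun i => lam i.succ with hlt
    set ctail : Fin d → ℂ := fun i => c i.succ with hct
    -- step A : one variable estimate in the first coordinate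
    have hg : DifferentiableOn ℂ (fun z : ℂ => f (Fin.cons z lamtail))
        (ball (c 0) (2 * rho')) := by
      have hm : Differentiable ℂ (fun z : ℂ => (Fin.cons z lamtail : Fin (d+1) → ℂ)) := by
        rw [differentiable_pi]
        intro i
        refine Fin.cases ?_ ?_ i
        · simpa using differentiable_id
        · intro j; simpa using differentiable_const (lamtail j)
      refine hf.comp hm.differentiableOn ?_
      intro z hz j
      rcases Fin.eq_zero_or_eq_succ j with rfl | ⟨i, rfl⟩
      · simpa [Complex.dist_eq] using mem_ball.1 hz
      · simp only [Fin.cons_succ]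
        exact lt_trans (hlam i.succ) (by linarith)
    have hco : Fin.cons (lam 0) lamtail = lam := by
      funext j
      refine Fin.cases rfl (fun i => rfl) j
    have stepA : ‖f lam‖ ≤
        Real.pi⁻¹ * ∫ t in Icc (0 : ℝ) (2 * Real.pi),
          ‖f (Fin.cons (circleMap (c 0) R t) lamtail)‖ := by
      have h := one_var_estimate hrho hrho' hg (w := lam 0) (by simpa using hlam 0)
      rw [hco] at h
      exact h
    -- step B : induction hypothesis for each fixed first coordinate on the circle
    have stepB : ∀ t0 : ℝ,
        ‖f (Fin.cons (circleMap (c 0) R t0) lamtail)‖ ≤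
          (Real.pi ^ d)⁻¹ * ∫ Θ in Icc (0 : Fin d → ℝ) fun _ => 2 * Real.pi,
            ‖f (Fin.cons (circleMap (c 0) R t0)
              (fun j => circleMap (ctail j) R (Θ j)))‖ := by
      intro t0
      have habs0 : ‖circleMap (c 0) R t0 - c 0‖ = R := by
        rw [circleMap_sub_center, norm_circleMap_zero, abs_of_pos hRpos]
      have hF : DifferentiableOn ℂ (fun w : Fin d → ℂ => f (Fin.cons (circleMap (c 0) R t0) w))
          {z : Fin d → ℂ | ∀ j, ‖z j - ctail j‖ < 2 * rho'} := by
        have hm : Differentiable ℂ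
            (fun w : Fin d → ℂ => (Fin.cons (circleMap (c 0) R t0) w : Fin (d+1) → ℂ)) := by
          rw [differentiable_pi]
          intro i
          refine Fin.cases ?_ ?_ i
          · simpa using differentiable_const (circleMap (c 0) R t0)
          · intro j; simpa using differentiable_apply j
        refine hf.comp hm.differentiableOn ?_
        intro w hw j
        rcases Fin.eq_zero_or_eq_succ j with rfl | ⟨i, rfl⟩
        · simp only [Fin.cons_zero]
          rw [habs0, hR]; linarith
        · simp only [Fin.cons_succ]
          exact hw i
      exact IH _ ctail hrho hrho' hF lamtail (fun j => hlam j.succ)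
    -- step C : Fubini
    set G : (Fin (d+1) → ℝ) → ℝ :=
      fun θ => ‖f (fun j => circleMap (c j) R (θ j))‖ with hG
    have hfc : ContinuousOn (fun z : Fin (d+1) → ℂ => ‖f z‖)
        {z : Fin (d+1) → ℂ | ∀ j, ‖z j - c j‖ < 2 * rho'} :=
      continuous_norm.comp_continuousOn hf.continuousOn
    have hGcont : ContinuousOn G (Icc (0 : Fin (d+1) → ℝ) fun _ => 2 * Real.pi) := by
      have hmap : Continuous fun θ : Fin (d+1) → ℝ => fun j => circleMap (c j) R (θ j) :=
        continuous_pi fun j => (continuous_circleMap (c j) R).comp (continuous_apply j)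
      have hmapsto : MapsTo (fun θ : Fin (d+1) → ℝ => fun j => circleMap (c j) R (θ j))
          (Icc (0 : Fin (d+1) → ℝ) fun _ => 2 * Real.pi)
          {z : Fin (d+1) → ℂ | ∀ j, ‖z j - c j‖ < 2 * rho'} := by
        intro θ _ j
        show ‖circleMap (c j) R (θ j) - c j‖ < 2 * rho'
        rw [circleMap_sub_center, norm_circleMap_zero, abs_of_pos hRpos, hR]
        linarith
      exact hfc.comp hmap.continuousOn hmapsto
    have hGint : IntegrableOn G (Icc (0 : Fin (d+1) → ℝ) fun _ => 2 * Real.pi) :=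
      hGcont.integrableOn_compact isCompact_Icc
    obtain ⟨hSliceInt, hFub⟩ := fubini_aux G hGint
    have hconsG : ∀ (t0 : ℝ) (Θ : Fin d → ℝ),
        G (Fin.cons t0 Θ) = ‖f (Fin.cons (circleMap (c 0) R t0)
          (fun j => circleMap (ctail j) R (Θ j)))‖ := by
      intro t0 Θ
      have harg : (fun j => circleMap (c j) R ((Fin.cons t0 Θ : Fin (d+1) → ℝ) j)) =
          Fin.cons (circleMap (c 0) R t0) (fun j => circleMap (ctail j) R (Θ j)) := by
        funext j
        rcases Fin.eq_zero_or_eq_succ j with rfl | ⟨i, rfl⟩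
        · simp
        · simp [hct]
      simp only [hG]
      rw [harg]
    -- assemble
    have hmono : (∫ t in Icc (0 : ℝ) (2 * Real.pi),
          ‖f (Fin.cons (circleMap (c 0) R t) lamtail)‖) ≤
        ∫ t in Icc (0 : ℝ) (2 * Real.pi),
          (Real.pi ^ d)⁻¹ * ∫ Θ in Icc (0 : Fin d → ℝ) fun _ => 2 * Real.pi,
            G (Fin.cons t Θ) := by
      refine setIntegral_mono_on ?_ (hSliceInt.const_mul _) measurableSet_Icc ?_
      · apply ContinuousOn.integrableOn_compact isCompact_Icc
        have hmap : Continuous fun t : ℝ => (Fin.cons (circleMap (c 0) R t) lamtail :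
            Fin (d+1) → ℂ) := by
          apply continuous_pi
          intro i
          refine Fin.cases ?_ ?_ i
          · simpa using continuous_circleMap (c 0) R
          · intro j; simpa using continuous_const
        have hmapsto : MapsTo (fun t : ℝ => (Fin.cons (circleMap (c 0) R t) lamtail :
              Fin (d+1) → ℂ)) (Icc (0 : ℝ) (2 * Real.pi))
            {z : Fin (d+1) → ℂ | ∀ j, ‖z j - c j‖ < 2 * rho'} := by
          intro t _ j
          rcases Fin.eq_zero_or_eq_succ j with rfl | ⟨i, rfl⟩
          · simp only [Fin.cons_zero]
            rw [circleMap_sub_center, norm_circleMap_zero, abs_of_pos hRpos, hR]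
            linarith
          · simp only [Fin.cons_succ]
            exact lt_trans (hlam i.succ) (by linarith)
        exact hfc.comp hmap.continuousOn hmapsto
      · intro t _
        simp only [hconsG]
        exact stepB t
    calc ‖f lam‖
        ≤ Real.pi⁻¹ * ∫ t in Icc (0 : ℝ) (2 * Real.pi),
            ‖f (Fin.cons (circleMap (c 0) R t) lamtail)‖ := stepA
      _ ≤ Real.pi⁻¹ * ∫ t in Icc (0 : ℝ) (2 * Real.pi),
            (Real.pi ^ d)⁻¹ * ∫ Θ in Icc (0 : Fin d → ℝ) fun _ => 2 * Real.pi,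
              G (Fin.cons t Θ) :=
          mul_le_mul_of_nonneg_left hmono (inv_nonneg.2 hpi.le)
      _ = (Real.pi ^ (d+1))⁻¹ *
            ∫ θ in Icc (0 : Fin (d+1) → ℝ) fun _ => 2 * Real.pi, G θ := by
          rw [integral_const_mul, ← hFub, pow_succ, mul_inv]
          ring
      _ = (Real.pi ^ (d+1))⁻¹ *
            ∫ t in Icc (0 : Fin (d+1) → ℝ) fun _ => 2 * Real.pi,
              ‖f (fun j => circleMap (c j) (2 * rho) (t j))‖ := rfl

theorem biggins_polydisc_estimate (d : ℕ) (f : (Fin d → ℂ) → ℂ)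
    (lam0 : Fin d → ℝ) (rho rho' : ℝ) (hrho : 0 < rho) (hrho' : rho < rho')
    (hf : AnalyticOn ℂ f {z : Fin d → ℂ | ∀ j, ‖z j - (lam0 j : ℂ)‖ < 2 * rho'}) :
    ∀ lam : Fin d → ℂ, (∀ j, ‖lam j - (lam0 j : ℂ)‖ < rho) →
      ‖f lam‖ ≤
        Real.pi ^ (-(d : ℝ)) *
          ∫ t in Set.pi Set.univ (fun _ : Fin d => Set.Icc (0 : ℝ) (2 * Real.pi)),
            ‖(f (fun j => (lam0 j : ℂ) + 2 * rho * Complex.exp (Complex.I * (t j : ℝ))))‖ := by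
  intro lam hlam
  have h1 := polydisc_aux d f (fun j => (lam0 j : ℂ)) hrho hrho' hf.differentiableOn lam hlam
  have h2 : Real.pi ^ (-(d : ℝ)) = (Real.pi ^ d)⁻¹ := by
    rw [Real.rpow_neg Real.pi_pos.le, Real.rpow_natCast]
  have h3 : (Set.pi Set.univ (fun _ : Fin d => Set.Icc (0 : ℝ) (2 * Real.pi))) =
      Icc (0 : Fin d → ℝ) (fun _ => 2 * Real.pi) := by
    rw [← Set.pi_univ_Icc]; rfl
  have h4 : ∀ t : Fin d → ℝ,
      (fun j => (lam0 j : ℂ) + 2 * rho * Complex.exp (Complex.I * (t j : ℝ))) =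
      (fun j => circleMap ((lam0 j : ℂ)) (2 * rho) (t j)) := by
    intro t
    funext j
    simp only [circleMap]
    push_cast
    ring
  rw [h2, h3]
  simpa only [h4] using h1
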